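/- Let a, b : ℝ → ℝ² be functions with a(0) = b(0) = (0,0) that are differentiable at 0 and whose derivatives a'(0), b'(0) at 0 are linearly independent. For t ≠ 0 set A_t = exp(X'(a(t))) and B_t = exp(X'(b(t))), and let V_t be the 4×4 matrix with rows (1/t², 1/t², 0, −1/t²), (0, 1/t, 0, −1/t), (0, 0, 1/t, 0), (0, 0, 0, 1). Then as t → 0 (through nonzero values), V_t·A_t·V_t⁻¹ converges to exp(ℓ₀(a'(0))) and V_t·B_t·V_t⁻¹ converges to exp(ℓ₀(b'(0))); moreover the two limit matrices commute and generate a free abelian group of rank 2, i.e. exp(ℓ₀(a'(0)))^m · exp(ℓ₀(b'(0)))^k = I with m, k ∈ ℤ implies m = k = 0. -/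

import Mathlib

/-!
Conjugation by `V_t` commutes with `exp`, and `V_t X'(x, y) V_t⁻¹ = ℓ₀(x/t, y/t) + x E₁₁`.
Since `a(t)/t → a'(0)` and `a(t) → 0`, these Lie algebra elements tend to `ℓ₀(a'(0))`, and
continuity of `exp` gives the limits. The matrices `ℓ₀(v)` commute with each other and satisfy
`ℓ₀(v)³ = 0`, so `v ↦ exp ℓ₀(v)` is a homomorphism `ℝ² → L₀`; it is injective because the
`(0,1)` and `(0,2)` entries of `exp ℓ₀(v) = 1 + ℓ₀(v) + ℓ₀(v)²/2` are `v`. Hence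
`exp(ℓ₀ a')^m exp(ℓ₀ b')^k = exp ℓ₀(m a' + k b')` is `1` only when `m a' + k b' = 0`.
-/

open scoped Topology

/-- The element `X'(a₁,a₂)` of the Lie algebra `𝔏'`. -/
def Xprime (v : ℝ × ℝ) : Matrix (Fin 4) (Fin 4) ℝ :=
  !![0, 0, v.2, -v.1;
     0, v.1, 0, 0;
     0, 0, 0, v.2;
     0, 0, 0, 0]

/-- The element `ℓ₀(r,s)` of the Lie algebra `𝔏₀`. -/
def ell0 (v : ℝ × ℝ) : Matrix (Fin 4) (Fin 4) ℝ :=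
  !![0, v.1, v.2, 0;
     0, 0, 0, v.1;
     0, 0, 0, v.2;
     0, 0, 0, 0]

/-- The conjugating matrix `V_t`. -/
noncomputable def Vmat (t : ℝ) : Matrix (Fin 4) (Fin 4) ℝ :=
  !![1 / t ^ 2, 1 / t ^ 2, 0, -(1 / t ^ 2);
     0, 1 / t, 0, -(1 / t);
     0, 0, 1 / t, 0;
     0, 0, 0, 1]

open Filter NormedSpace

theorem exp_eq_sum_range_of_pow_eq_zero {𝔸 : Type*} [Ring 𝔸] [Algebra ℚ 𝔸] [TopologicalSpace 𝔸]
    [IsTopologicalRing 𝔸] {a : 𝔸} {n : ℕ} (h : a ^ n = 0) :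
    exp a = ∑ k ∈ Finset.range n, (k.factorial⁻¹ : ℚ) • a ^ k := by
  rw [exp_eq_tsum_rat]
  refine tsum_eq_sum fun k hk => ?_
  rw [pow_eq_zero_of_le (by simpa using hk) h, smul_zero]

theorem ell0_add (u v : ℝ × ℝ) : ell0 (u + v) = ell0 u + ell0 v := by
  ext i j; fin_cases i <;> fin_cases j <;> simp [ell0]

theorem ell0_smul (c : ℝ) (v : ℝ × ℝ) : ell0 (c • v) = c • ell0 v := by
  ext i j; fin_cases i <;> fin_cases j <;> simp [ell0]

theorem continuous_ell0 : Continuous ell0 := by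
  refine continuous_pi fun i => continuous_pi fun j => ?_
  fin_cases i <;> fin_cases j <;> simp [ell0] <;> fun_prop

theorem ell0_mul_ell0 (u v : ℝ × ℝ) :
    ell0 u * ell0 v = Matrix.single 0 3 (u.1 * v.1 + u.2 * v.2) := by
  ext i j; fin_cases i <;> fin_cases j <;> simp [ell0, Matrix.mul_apply, Fin.sum_univ_four]

theorem commute_ell0 (u v : ℝ × ℝ) : Commute (ell0 u) (ell0 v) := by
  rw [Commute, SemiconjBy, ell0_mul_ell0, ell0_mul_ell0, mul_comm u.1, mul_comm u.2]

theorem ell0_pow_three (v : ℝ × ℝ) : ell0 v ^ 3 = 0 := by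
  rw [pow_succ, sq, ell0_mul_ell0]
  ext i j; fin_cases i <;> fin_cases j <;> simp [ell0, Matrix.mul_apply, Fin.sum_univ_four]

theorem exp_ell0 (v : ℝ × ℝ) :
    exp (ell0 v) = 1 + ell0 v + (2 : ℚ)⁻¹ • Matrix.single 0 3 (v.1 ^ 2 + v.2 ^ 2) := by
  rw [exp_eq_sum_range_of_pow_eq_zero (ell0_pow_three v)]
  simp [Finset.sum_range_succ, sq, ell0_mul_ell0]

theorem eq_zero_of_exp_ell0_eq_one {v : ℝ × ℝ} (h : exp (ell0 v) = 1) : v = 0 := by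
  rw [exp_ell0] at h
  exact Prod.ext (by simpa [ell0] using congrFun (congrFun h 0) 1)
    (by simpa [ell0] using congrFun (congrFun h 0) 2)

theorem exp_ell0_add (u v : ℝ × ℝ) : exp (ell0 (u + v)) = exp (ell0 u) * exp (ell0 v) := by
  rw [ell0_add, Matrix.exp_add_of_commute _ _ (commute_ell0 u v)]

theorem exp_ell0_zpow (v : ℝ × ℝ) (m : ℤ) : exp (ell0 v) ^ m = exp (ell0 ((m : ℝ) • v)) := by
  rw [← Matrix.exp_zsmul, ell0_smul, Int.cast_smul_eq_zsmul]

theorem isUnit_Vmat {t : ℝ} (ht : t ≠ 0) : IsUnit (Vmat t) := by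
  rw [Matrix.isUnit_iff_isUnit_det, Matrix.det_of_isUpperTriangular]
  · simpa [Vmat, Fin.prod_univ_four] using ht
  · intro i j hij; fin_cases i <;> fin_cases j <;> simp_all [Vmat]

theorem Vmat_mul_Xprime (t : ℝ) (v : ℝ × ℝ) :
    Vmat t * Xprime v = (ell0 (t⁻¹ • v) + v.1 • Matrix.single 1 1 1) * Vmat t := by
  ext i j
  fin_cases i <;> fin_cases j <;> simp [Vmat, Xprime, ell0, Matrix.mul_apply, Fin.sum_univ_four] <;>
    ring

theorem Vmat_mul_Xprime_mul_inv {t : ℝ} (ht : t ≠ 0) (v : ℝ × ℝ) :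
    Vmat t * Xprime v * (Vmat t)⁻¹ = ell0 (t⁻¹ • v) + v.1 • Matrix.single 1 1 1 := by
  rw [Vmat_mul_Xprime, Matrix.mul_nonsing_inv_cancel_right (A := Vmat t) _
    ((Matrix.isUnit_iff_isUnit_det _).mp (isUnit_Vmat ht))]

theorem tendsto_Vmat_mul_exp_Xprime_mul_inv {a : ℝ → ℝ × ℝ} {a' : ℝ × ℝ} (ha0 : a 0 = 0)
    (ha : HasDerivAt a a' 0) :
    Tendsto (fun t => Vmat t * exp (Xprime (a t)) * (Vmat t)⁻¹) (𝓝[≠] 0)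
      (𝓝 (exp (ell0 a'))) := by
  have hslope : Tendsto (fun t => t⁻¹ • a t) (𝓝[≠] 0) (𝓝 a') :=
    (hasDerivAt_iff_tendsto_slope.mp ha).congr fun t => by simp [slope_def_module, ha0]
  have hvanish : Tendsto (fun t => (a t).1) (𝓝[≠] 0) (𝓝 0) := by
    simpa [ha0] using (ha.continuousAt.fst.tendsto).mono_left nhdsWithin_le_nhds
  have hconj : Tendsto (fun t => ell0 (t⁻¹ • a t) + (a t).1 • Matrix.single 1 1 1) (𝓝[≠] 0)
      (𝓝 (ell0 a')) := by
    simpa only [Function.comp_def, zero_smul, add_zero] using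
      ((continuous_ell0.tendsto a').comp hslope).add (hvanish.smul_const _)
  -- any operator norm on matrices induces the entrywise topology, so it may be used here
  have hexp : Continuous (exp : Matrix (Fin 4) (Fin 4) ℝ → _) :=
    open scoped Matrix.Norms.Operator in exp_continuous
  refine ((hexp.tendsto _).comp hconj).congr' ?_
  filter_upwards [self_mem_nhdsWithin] with t ht
  rw [Function.comp_apply, ← Vmat_mul_Xprime_mul_inv ht, Matrix.exp_conj _ _ (isUnit_Vmat ht)]

/-- Proposition 3.4: if `a, b : ℝ → ℝ²` vanish at `0`, are differentiable at `0`, and have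
linearly independent derivatives there, then the `V_t`-conjugates of `exp(X'(a(t)))` and
`exp(X'(b(t)))` converge as `t → 0` to `exp(ℓ₀(a'(0)))` and `exp(ℓ₀(b'(0)))`, which commute
and generate a rank-2 free abelian group. -/
theorem stmt_14 (a b : ℝ → ℝ × ℝ) (a' b' : ℝ × ℝ)
    (ha0 : a 0 = 0) (hb0 : b 0 = 0)
    (ha : HasDerivAt a a' 0) (hb : HasDerivAt b b' 0)
    (hind : LinearIndependent ℝ ![a', b']) :
    Filter.Tendsto (fun t : ℝ => Vmat t * NormedSpace.exp (Xprime (a t)) * (Vmat t)⁻¹)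
      (𝓝[≠] 0) (𝓝 (NormedSpace.exp (ell0 a'))) ∧
    Filter.Tendsto (fun t : ℝ => Vmat t * NormedSpace.exp (Xprime (b t)) * (Vmat t)⁻¹)
      (𝓝[≠] 0) (𝓝 (NormedSpace.exp (ell0 b'))) ∧
    Commute (NormedSpace.exp (ell0 a')) (NormedSpace.exp (ell0 b')) ∧
    ∀ m k : ℤ, NormedSpace.exp (ell0 a') ^ m * NormedSpace.exp (ell0 b') ^ k = 1 →
      m = 0 ∧ k = 0 := by
  refine ⟨tendsto_Vmat_mul_exp_Xprime_mul_inv ha0 ha, tendsto_Vmat_mul_exp_Xprime_mul_inv hb0 hb,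
    ?_, fun m k hmk => ?_⟩
  · rw [Commute, SemiconjBy, ← exp_ell0_add, ← exp_ell0_add, add_comm]
  · rw [exp_ell0_zpow, exp_ell0_zpow, ← exp_ell0_add] at hmk
    obtain ⟨hm, hk⟩ := LinearIndependent.pair_iff.mp hind _ _ (eq_zero_of_exp_ell0_eq_one hmk)
    exact ⟨mod_cast hm, mod_cast hk⟩
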